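/- arXiv:1604.02011 — 4 statements merged into one kernel-verified Lean document; each statement's English description precedes it below -/
import Mathlib

section
/- The matrix element integral J_{n,m}(α) = ∫_ℝ φ_n(x) φ_m(x) e^{iαx} dx, where φ_n(x) = (√(2π) n!)^{-1/2} e^{-x²/4} He_n(x) are the probabilist-Hermite oscillator functions, satisfies for m ≥ n and real α: J_{n,m}(α) = e^{-α²/2} (n!m!)^{-1/2} Σ_{k=0}^{n} C(n,k) C(m,k) k! (iα)^{n+m-2k}. -/
open MeasureTheory Finset
open scoped Real

/-- The probabilist-Hermite oscillator wave function
`φ_n(x) = (√(2π) n!)^{-1/2} e^{-x²/4} He_n(x)`. -/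
noncomputable def oscFun (n : ℕ) (x : ℝ) : ℝ :=
  (Real.sqrt (Real.sqrt (2 * π) * n.factorial))⁻¹ * Real.exp (-x ^ 2 / 4) *
    (Polynomial.aeval x (Polynomial.hermite n))

/-!
Since `φ_n φ_m = (2π n! m!)^{-1/2} He_n He_m e^{-x²/2}`, the integral is a value of the additive
map `G(P) = ∫ P(x) e^{-x²/2} e^{iαx} dx` on integer polynomials. Integration by parts gives
`G(XP - P') = iα G(P)`; together with `He_{n+1} = X He_n - He_n'` and `He_m' = m He_{m-1}` this
yields `G(He_{n+1} He_m) = iα G(He_n He_m) + m G(He_n He_{m-1})`. The sum on the right-hand side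
satisfies the same recurrence by Pascal's rule, and both start from the Fourier transform of the
Gaussian, `G(1) = √(2π) e^{-α²/2}`.
-/

open Polynomial

section OverlapSum

variable {R : Type*} [CommRing R] (z : R)

def overlapSum (n m : ℕ) : R :=
  ∑ k ∈ range (n + 1), (n.choose k * m.choose k * k.factorial : R) * z ^ (n + m - 2 * k)

theorem overlapSum_zero_left (m : ℕ) : overlapSum z 0 m = z ^ m := by
  simp [overlapSum]

/-- Terms with `k > min n m` vanish, so the truncated subtraction in the exponent is harmless. -/
theorem choose_mul_choose_mul_pow_succ (n m k : ℕ) :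
    (n.choose k * m.choose k * k.factorial : R) * z ^ (n + 1 + m - 2 * k)
      = z * ((n.choose k * m.choose k * k.factorial : R) * z ^ (n + m - 2 * k)) := by
  by_cases hk : k ≤ n ∧ k ≤ m
  · rw [show n + 1 + m - 2 * k = n + m - 2 * k + 1 by omega, pow_succ]
    ring
  · rcases not_and_or.mp hk with hk | hk <;>
      simp [Nat.choose_eq_zero_of_lt (not_le.mp hk)]

theorem choose_mul_choose_succ_mul_pow (n m k : ℕ) :
    (n.choose k * m.choose (k + 1) * (k + 1).factorial : R) * z ^ (n + 1 + m - 2 * (k + 1))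
      = m * ((n.choose k * (m - 1).choose k * k.factorial : R) * z ^ (n + (m - 1) - 2 * k)) := by
  cases m with
  | zero => simp
  | succ m =>
    have h := congrArg (Nat.cast (R := R)) (Nat.add_one_mul_choose_eq m k)
    push_cast at h
    rw [show n + 1 + (m + 1) - 2 * (k + 1) = n + (m + 1 - 1) - 2 * k by omega,
      Nat.factorial_succ, Nat.add_sub_cancel]
    push_cast
    linear_combination -(n.choose k * k.factorial * z ^ (n + m - 2 * k) : R) * h

theorem overlapSum_succ_left (n m : ℕ) :
    overlapSum z (n + 1) m = z * overlapSum z n m + m * overlapSum z n (m - 1) := by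
  have hshift : overlapSum z (n + 1) m
      = ∑ k ∈ range (n + 2), (n.choose k * m.choose k * k.factorial : R) * z ^ (n + 1 + m - 2 * k)
        + ∑ k ∈ range (n + 1),
          (n.choose k * m.choose (k + 1) * (k + 1).factorial : R) * z ^ (n + 1 + m - 2 * (k + 1)) := by
    rw [overlapSum, sum_range_succ' _ (n + 1), sum_range_succ' _ (n + 1)]
    simp only [Nat.choose_succ_succ', Nat.cast_add, add_mul, sum_add_distrib, Nat.choose_zero_right,
      Nat.factorial_zero, Nat.cast_one, mul_one, mul_zero, tsub_zero]
    ring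
  rw [hshift, sum_range_succ, Nat.choose_succ_self, overlapSum, overlapSum, mul_sum, mul_sum]
  simp only [choose_mul_choose_mul_pow_succ, choose_mul_choose_succ_mul_pow]
  simp

end OverlapSum

theorem derivative_hermite (n : ℕ) : derivative (hermite n) = n • hermite (n - 1) := by
  induction n with
  | zero => simp
  | succ n ih =>
    rw [hermite_succ, derivative_sub, derivative_mul, derivative_X, one_mul, ih]
    cases n with
    | zero => simp
    | succ k =>
      rw [Nat.add_sub_cancel, Nat.add_sub_cancel, derivative_smul, mul_smul_comm, add_sub_assoc,
        ← smul_sub, ← hermite_succ, succ_nsmul]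
      simp only [nsmul_eq_mul]
      push_cast
      ring

theorem integrable_aeval_mul_exp_neg_mul_sq {b : ℝ} (hb : 0 < b) (P : ℤ[X]) :
    Integrable fun x : ℝ => aeval x P * Real.exp (-b * x ^ 2) := by
  induction P using Polynomial.induction_on' with
  | add p q hp hq => simpa [add_mul, Pi.add_def] using hp.add hq
  | monomial i c =>
    have h := (integrable_rpow_mul_exp_neg_mul_sq hb (s := i)
      (by linarith [i.cast_nonneg (α := ℝ)])).const_mul (c : ℝ)
    simp_rw [Real.rpow_natCast] at h
    simpa [aeval_monomial, mul_assoc] using h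

theorem hasDerivAt_aeval_mul_exp_neg_half_sq (P : ℤ[X]) (x : ℝ) :
    HasDerivAt (fun x : ℝ => aeval x P * Real.exp (-(1 / 2) * x ^ 2))
      (aeval x (derivative P - X * P) * Real.exp (-(1 / 2) * x ^ 2)) x := by
  have hexp := ((hasDerivAt_pow 2 x).const_mul (-(1 / 2) : ℝ)).exp
  refine ((P.hasDerivAt_aeval x).mul hexp).congr_deriv ?_
  simp only [map_sub, map_mul, aeval_X]
  ring

theorem hasDerivAt_cexp_I_mul (α x : ℝ) :
    HasDerivAt (fun x : ℝ => Complex.exp (Complex.I * α * x))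
      (Complex.I * α * Complex.exp (Complex.I * α * x)) x := by
  have h := ((Complex.ofRealCLM.hasDerivAt (x := x)).const_mul (Complex.I * α)).cexp
  simpa [mul_comm] using h

theorem norm_cexp_I_mul (α x : ℝ) : ‖Complex.exp (Complex.I * α * x)‖ = 1 := by
  rw [Complex.norm_exp]
  simp

noncomputable def gaussianFourierIntegrand (α : ℝ) (P : ℤ[X]) (x : ℝ) : ℂ :=
  (aeval x P * Real.exp (-(1 / 2) * x ^ 2) : ℝ) * Complex.exp (Complex.I * α * x)

theorem integrable_gaussianFourierIntegrand (α : ℝ) (P : ℤ[X]) :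
    Integrable (gaussianFourierIntegrand α P) :=
  ((integrable_aeval_mul_exp_neg_mul_sq one_half_pos P).ofReal (𝕜 := ℂ)).mul_bdd
    (by fun_prop) (ae_of_all _ fun x => (norm_cexp_I_mul α x).le)

noncomputable def gaussianFourier (α : ℝ) : ℤ[X] →+ ℂ where
  toFun P := ∫ x, gaussianFourierIntegrand α P x
  map_zero' := by simp [gaussianFourierIntegrand]
  map_add' P Q := by
    rw [← integral_add (integrable_gaussianFourierIntegrand α P)
      (integrable_gaussianFourierIntegrand α Q)]
    simp only [gaussianFourierIntegrand, map_add, add_mul, Complex.ofReal_add]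

theorem gaussianFourier_apply (α : ℝ) (P : ℤ[X]) :
    gaussianFourier α P = ∫ x, gaussianFourierIntegrand α P x := rfl

theorem gaussianFourier_X_mul_sub_derivative (α : ℝ) (P : ℤ[X]) :
    gaussianFourier α (X * P - derivative P) = Complex.I * α * gaussianFourier α P := by
  have hderiv (x : ℝ) : HasDerivAt (gaussianFourierIntegrand α P)
      (Complex.I * α * gaussianFourierIntegrand α P x
        - gaussianFourierIntegrand α (X * P - derivative P) x) x := by
    refine ((hasDerivAt_aeval_mul_exp_neg_half_sq P x).ofReal_comp.mul
      (hasDerivAt_cexp_I_mul α x)).congr_deriv ?_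
    simp only [gaussianFourierIntegrand, map_sub, Complex.ofReal_mul, Complex.ofReal_sub]
    ring
  have h := integral_eq_zero_of_hasDerivAt_of_integrable hderiv
    (((integrable_gaussianFourierIntegrand α P).const_mul _).sub
      (integrable_gaussianFourierIntegrand α _)) (integrable_gaussianFourierIntegrand α P)
  rw [integral_sub ((integrable_gaussianFourierIntegrand α P).const_mul _)
    (integrable_gaussianFourierIntegrand α _), integral_const_mul] at h
  rw [gaussianFourier_apply, gaussianFourier_apply]
  linear_combination -h

theorem gaussianFourier_one (α : ℝ) :
    gaussianFourier α 1 = (√(2 * π) * Real.exp (-α ^ 2 / 2) : ℝ) := by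
  have h := fourierIntegral_gaussian (b := 1 / 2) (by norm_num) α
  have hsqrt : ((π : ℂ) / (1 / 2)) ^ (1 / 2 : ℂ) = (√(2 * π) : ℝ) := by
    rw [Real.sqrt_eq_rpow, Complex.ofReal_cpow (by positivity)]
    push_cast
    ring_nf
  have hexp : Complex.exp (-(α : ℂ) ^ 2 / (4 * (1 / 2))) = (Real.exp (-α ^ 2 / 2) : ℝ) := by
    push_cast
    ring_nf
  rw [hsqrt, hexp, ← Complex.ofReal_mul] at h
  rw [gaussianFourier_apply, ← h]
  congr 1 with x
  simp only [gaussianFourierIntegrand, map_one, one_mul, Complex.ofReal_exp]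
  push_cast
  ring_nf

theorem gaussianFourier_hermite_succ_mul (α : ℝ) (n m : ℕ) :
    gaussianFourier α (hermite (n + 1) * hermite m)
      = Complex.I * α * gaussianFourier α (hermite n * hermite m)
        + m * gaussianFourier α (hermite n * hermite (m - 1)) := by
  have hrec : X * (hermite n * hermite m) - derivative (hermite n * hermite m)
      = hermite (n + 1) * hermite m - m • (hermite n * hermite (m - 1)) := by
    simp only [derivative_mul, derivative_hermite, hermite_succ, nsmul_eq_mul]
    ring
  have h := gaussianFourier_X_mul_sub_derivative α (hermite n * hermite m)
  rw [hrec, map_sub, map_nsmul, nsmul_eq_mul] at h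
  linear_combination h

theorem gaussianFourier_hermite_mul_hermite (α : ℝ) (n m : ℕ) :
    gaussianFourier α (hermite n * hermite m)
      = (√(2 * π) * Real.exp (-α ^ 2 / 2) : ℝ) * overlapSum (Complex.I * α) n m := by
  induction n generalizing m with
  | zero =>
    rw [overlapSum_zero_left]
    induction m with
    | zero => simp [gaussianFourier_one]
    | succ m ih =>
      rw [mul_comm, gaussianFourier_hermite_succ_mul, mul_comm (hermite m), ih]
      ring
  | succ n ih =>
    rw [gaussianFourier_hermite_succ_mul, ih, ih, overlapSum_succ_left]
    ring

theorem oscFun_mul_oscFun (n m : ℕ) (x : ℝ) :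
    oscFun n x * oscFun m x = (√(2 * π) * √(n.factorial * m.factorial))⁻¹ *
      (aeval x (hermite n * hermite m) * Real.exp (-(1 / 2) * x ^ 2)) := by
  have hnorm : √(√(2 * π) * n.factorial) * √(√(2 * π) * m.factorial)
      = √(2 * π) * √(n.factorial * m.factorial) := by
    rw [← Real.sqrt_mul (by positivity), mul_mul_mul_comm, Real.sqrt_mul (by positivity),
      Real.sqrt_mul_self (by positivity)]
  have hexp : Real.exp (-x ^ 2 / 4) * Real.exp (-x ^ 2 / 4) = Real.exp (-(1 / 2) * x ^ 2) := by
    rw [← Real.exp_add]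
    ring_nf
  rw [oscFun, oscFun, ← hnorm, map_mul, ← hexp, mul_inv]
  ring

theorem J_integral_eq_sum_general (n m : ℕ) (α : ℝ) :
    (∫ x : ℝ, (oscFun n x * oscFun m x : ℂ) * Complex.exp (Complex.I * α * x))
      = (Real.exp (-α ^ 2 / 2) / Real.sqrt (n.factorial * m.factorial) : ℝ) *
        ∑ k ∈ Finset.range (n + 1),
          ((n.choose k : ℂ) * (m.choose k : ℂ) * (k.factorial : ℂ)) *
            (Complex.I * α) ^ (n + m - 2 * k) := by
  have hintegrand (x : ℝ) : (oscFun n x * oscFun m x : ℂ) * Complex.exp (Complex.I * α * x)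
      = ((√(2 * π) * √(n.factorial * m.factorial))⁻¹ : ℝ)
        * gaussianFourierIntegrand α (hermite n * hermite m) x := by
    rw [← Complex.ofReal_mul, oscFun_mul_oscFun, gaussianFourierIntegrand]
    push_cast
    ring
  simp_rw [hintegrand]
  rw [integral_const_mul, ← gaussianFourier_apply, gaussianFourier_hermite_mul_hermite,
    overlapSum, ← mul_assoc, ← Complex.ofReal_mul]
  congr 2
  field_simp

theorem J_integral_eq_sum (n m : ℕ) (hnm : n ≤ m) (α : ℝ) :
    (∫ x : ℝ, (oscFun n x * oscFun m x : ℂ) * Complex.exp (Complex.I * α * x))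
      = (Real.exp (-α ^ 2 / 2) / Real.sqrt (n.factorial * m.factorial) : ℝ) *
        ∑ k ∈ Finset.range (n + 1),
          ((n.choose k : ℂ) * (m.choose k : ℂ) * (k.factorial : ℂ)) *
            (Complex.I * α) ^ (n + m - 2 * k) :=
  J_integral_eq_sum_general n m α
end

section
/- For ρ a d×d density matrix and D a d×d unitary matrix with tr(D²) having modulus at most d, the Haar average of the decoherence factor satisfies: ∫ tr[(U†⊗U†)(ρ⊗ρ)(U⊗U)(D⊗D†)] dU = |tr D|² (d − tr ρ²)/(d(d²−1)) + (d tr ρ² − 1)/(d²−1), where dU is the Haar probability measure on U(d), assuming the twirling identity ∫ (U⊗U)(X⊗X)(U†⊗U†) dU = [2/(d(d+1))] tr(Π_sym X⊗X) Π_sym + [2/(d(d−1))] tr(Π_asym X⊗X) Π_asym for Hermitian X. -/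
open Matrix MeasureTheory
open scoped Kronecker ComplexOrder

attribute [local instance] Matrix.linftyOpNormedAddCommGroup Matrix.linftyOpNormedSpace

/-- The swap operator `V(x ⊗ y) = y ⊗ x` on `ℂ^d ⊗ ℂ^d`. -/
def swapMatrix (d : ℕ) : Matrix (Fin d × Fin d) (Fin d × Fin d) ℂ :=
  fun p q => if p.1 = q.2 ∧ p.2 = q.1 then 1 else 0

/-!
Write `D = A + i B` with `A = ℜ D` and `B = ℑ D` Hermitian. For `M = U† ρ U` the integrand is
`tr (M D) · tr (M D†) = tr (M A)² + tr (M B)²`, and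
`tr (M X)² = tr ((ρ ⊗ ρ) (U ⊗ U) (X ⊗ X) (U† ⊗ U†))`, so the twirling identity evaluates each
term through `tr (Π_sym (X ⊗ Y)) = (tr X tr Y + tr (X Y)) / 2` and
`tr (Π_asym (X ⊗ Y)) = (tr X tr Y - tr (X Y)) / 2`. The result only depends on
`(tr A)² + (tr B)² = |tr D|²` and `tr A² + tr B² = tr (D† D) = d`.
-/

open ComplexStarModule

lemma Matrix.div_two_eq_inv_smul {n : Type*} [Fintype n] [DecidableEq n] (M : Matrix n n ℂ) :
    M / 2 = (2⁻¹ : ℂ) • M := by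
  rw [div_eq_mul_inv, Matrix.inv_eq_left_inv (B := (2⁻¹ : ℂ) • 1)]
  · rw [Matrix.mul_smul, mul_one]
  · rw [smul_mul_assoc, one_mul, ← one_add_one_eq_two (R := Matrix n n ℂ), ← two_smul ℂ,
      smul_smul]
    norm_num

lemma swapMatrix_mul_self (d : ℕ) : swapMatrix d * swapMatrix d = 1 := by
  ext ⟨i, j⟩ ⟨k, l⟩
  simp only [mul_apply, swapMatrix, one_apply, Fintype.sum_prod_type, mul_ite, mul_one, mul_zero,
    ite_and, Prod.mk.injEq]
  simp [eq_comm]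

lemma trace_swapMatrix (d : ℕ) : (swapMatrix d).trace = d := by
  simp only [Matrix.trace, diag, swapMatrix, Fintype.sum_prod_type, ite_and]
  simp [eq_comm]

lemma trace_swapMatrix_mul_kronecker {d : ℕ} (P Q : Matrix (Fin d) (Fin d) ℂ) :
    (swapMatrix d * (P ⊗ₖ Q)).trace = (P * Q).trace := by
  simp only [Matrix.trace, diag, mul_apply, swapMatrix, kroneckerMap_apply,
    Fintype.sum_prod_type, ite_mul, one_mul, zero_mul, ite_and]
  simp only [Finset.sum_ite_eq, Finset.mem_univ, if_true]
  exact Finset.sum_comm.symm.trans (by simp)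

section Projectors

variable {d : ℕ}

noncomputable def symProj (d : ℕ) : Matrix (Fin d × Fin d) (Fin d × Fin d) ℂ :=
  (1 + swapMatrix d) / 2

noncomputable def antisymProj (d : ℕ) : Matrix (Fin d × Fin d) (Fin d × Fin d) ℂ :=
  (1 - swapMatrix d) / 2

/-- The value of `∫ (U ⊗ U) (X ⊗ X) (U† ⊗ U†) dU` given by Schur–Weyl duality. -/
noncomputable def schurWeylTwirl (d : ℕ) (X : Matrix (Fin d) (Fin d) ℂ) :
    Matrix (Fin d × Fin d) (Fin d × Fin d) ℂ :=
  (2 / (d * (d + 1)) : ℂ) • ((symProj d * (X ⊗ₖ X)).trace • symProj d)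
    + (2 / (d * (d - 1)) : ℂ) • ((antisymProj d * (X ⊗ₖ X)).trace • antisymProj d)

lemma trace_symProj_mul_kronecker (X Y : Matrix (Fin d) (Fin d) ℂ) :
    (symProj d * (X ⊗ₖ Y)).trace = (X.trace * Y.trace + (X * Y).trace) / 2 := by
  rw [symProj, div_two_eq_inv_smul, smul_mul_assoc, trace_smul, add_mul, trace_add, one_mul,
    trace_kronecker, trace_swapMatrix_mul_kronecker, smul_eq_mul, inv_mul_eq_div]

lemma trace_antisymProj_mul_kronecker (X Y : Matrix (Fin d) (Fin d) ℂ) :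
    (antisymProj d * (X ⊗ₖ Y)).trace = (X.trace * Y.trace - (X * Y).trace) / 2 := by
  rw [antisymProj, div_two_eq_inv_smul, smul_mul_assoc, trace_smul, sub_mul, trace_sub, one_mul,
    trace_kronecker, trace_swapMatrix_mul_kronecker, smul_eq_mul, inv_mul_eq_div]

lemma trace_symProj_mul_swapMatrix (d : ℕ) :
    (symProj d * swapMatrix d).trace = d * (d + 1) / 2 := by
  rw [symProj, div_two_eq_inv_smul, smul_mul_assoc, add_mul, one_mul, swapMatrix_mul_self,
    trace_smul, trace_add, trace_swapMatrix, trace_one]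
  simp only [Fintype.card_prod, Fintype.card_fin, Nat.cast_mul, smul_eq_mul]
  ring

lemma trace_antisymProj_mul_swapMatrix (d : ℕ) :
    (antisymProj d * swapMatrix d).trace = -(d * (d - 1) / 2) := by
  rw [antisymProj, div_two_eq_inv_smul, smul_mul_assoc, sub_mul, one_mul, swapMatrix_mul_self,
    trace_smul, trace_sub, trace_swapMatrix, trace_one]
  simp only [Fintype.card_prod, Fintype.card_fin, Nat.cast_mul, smul_eq_mul]
  ring

lemma trace_schurWeylTwirl_mul_swapMatrix (hd : 1 < d) (X : Matrix (Fin d) (Fin d) ℂ) :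
    (schurWeylTwirl d X * swapMatrix d).trace = (X * X).trace := by
  have hd₀ : (d : ℂ) ≠ 0 := by exact_mod_cast (by omega : d ≠ 0)
  have hd₁ : (d : ℂ) - 1 ≠ 0 := sub_ne_zero.mpr (by exact_mod_cast (by omega : d ≠ 1))
  have hd₂ : (d : ℂ) + 1 ≠ 0 := by exact_mod_cast (by omega : d + 1 ≠ 0)
  simp only [schurWeylTwirl, add_mul, smul_mul_assoc, trace_add, trace_smul, smul_eq_mul,
    trace_symProj_mul_swapMatrix, trace_antisymProj_mul_swapMatrix,
    trace_symProj_mul_kronecker, trace_antisymProj_mul_kronecker]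
  field_simp
  ring

lemma schurWeylTwirl_ne_zero (hd : 1 < d) {X : Matrix (Fin d) (Fin d) ℂ} (hX : X.IsHermitian)
    (hX₀ : X ≠ 0) : schurWeylTwirl d X ≠ 0 := by
  intro h
  have hXX : (Xᴴ * X).trace = 0 := by
    rw [hX.eq, ← trace_schurWeylTwirl_mul_swapMatrix hd, h, zero_mul, trace_zero]
  exact hX₀ (trace_conjTranspose_mul_self_eq_zero_iff.mp hXX)

lemma trace_kronecker_mul_schurWeylTwirl (ρ X : Matrix (Fin d) (Fin d) ℂ) :
    ((ρ ⊗ₖ ρ) * schurWeylTwirl d X).trace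
      = (X.trace ^ 2 + (X * X).trace) * (ρ.trace ^ 2 + (ρ * ρ).trace) / (2 * d * (d + 1))
        + (X.trace ^ 2 - (X * X).trace) * (ρ.trace ^ 2 - (ρ * ρ).trace)
          / (2 * d * (d - 1)) := by
  simp only [schurWeylTwirl, Matrix.mul_add, Matrix.mul_smul, trace_add, trace_smul, smul_eq_mul]
  rw [trace_mul_comm (ρ ⊗ₖ ρ), trace_mul_comm (ρ ⊗ₖ ρ), trace_symProj_mul_kronecker,
    trace_antisymProj_mul_kronecker, trace_symProj_mul_kronecker, trace_antisymProj_mul_kronecker]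
  simp only [div_eq_mul_inv, mul_inv]
  ring

end Projectors

lemma trace_mul_sq_eq_trace_kronecker {n R : Type*} [Fintype n] [CommSemiring R]
    (ρ U V X : Matrix n n R) :
    (V * ρ * U * X).trace ^ 2 = ((ρ ⊗ₖ ρ) * ((U ⊗ₖ U) * (X ⊗ₖ X) * (V ⊗ₖ V))).trace := by
  have hcycle : (ρ * (U * X * V)).trace = (V * ρ * U * X).trace := by
    rw [Matrix.mul_assoc V, Matrix.mul_assoc V, trace_mul_comm V]
    simp only [Matrix.mul_assoc]
  simp only [← mul_kronecker_mul, trace_kronecker, hcycle, sq]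

lemma trace_mul_mul_trace_mul_conjTranspose {n : Type*} [Fintype n] (M D : Matrix n n ℂ) :
    (M * D).trace * (M * Dᴴ).trace = (M * ℜ D).trace ^ 2 + (M * ℑ D).trace ^ 2 := by
  have hD := realPart_add_I_smul_imaginaryPart D
  have hDstar : Dᴴ = ℜ D - Complex.I • ℑ D := by
    rw [← star_eq_conjTranspose]
    conv_lhs => rw [← hD]
    rw [star_add, star_smul, (ℜ D).prop.star_eq, (ℑ D).prop.star_eq, Complex.star_def,
      Complex.conj_I, neg_smul, sub_eq_add_neg]
  have hre : (M * D).trace = (M * ℜ D).trace + Complex.I * (M * ℑ D).trace := by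
    conv_lhs => rw [← hD]
    rw [Matrix.mul_add, trace_add, Matrix.mul_smul, trace_smul, smul_eq_mul]
  have him : (M * Dᴴ).trace = (M * ℜ D).trace - Complex.I * (M * ℑ D).trace := by
    rw [hDstar, Matrix.mul_sub, trace_sub, Matrix.mul_smul, trace_smul, smul_eq_mul]
  rw [hre, him]
  linear_combination (-(M * ℑ D).trace ^ 2) * Complex.I_sq

section Integral

variable {n : Type*} [Fintype n]
  {α : Type*} [MeasurableSpace α] {μ : Measure α} {f : α → Matrix n n ℂ}

lemma integrable_trace_mul_left_of_integral_ne_zero (hf : ∫ x, f x ∂μ ≠ 0)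
    (C : Matrix n n ℂ) : Integrable (fun x => (C * f x).trace) μ :=
  (LinearMap.toContinuousLinearMap ((traceLinearMap n ℂ ℂ).comp (LinearMap.mulLeft ℂ C))
    ).integrable_comp (Integrable.of_integral_ne_zero hf)

lemma integral_trace_mul_left_of_integral_ne_zero (hf : ∫ x, f x ∂μ ≠ 0)
    (C : Matrix n n ℂ) : ∫ x, (C * f x).trace ∂μ = (C * ∫ x, f x ∂μ).trace :=
  (LinearMap.toContinuousLinearMap ((traceLinearMap n ℂ ℂ).comp (LinearMap.mulLeft ℂ C))
    ).integral_comp_comm (Integrable.of_integral_ne_zero hf)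

end Integral

section Twirl

variable {d : ℕ} [MeasurableSpace (unitaryGroup (Fin d) ℂ)]
  {μ : Measure (unitaryGroup (Fin d) ℂ)} {X : Matrix (Fin d) (Fin d) ℂ}

lemma integrable_sq_trace_conj_mul (hd : 1 < d) (hX : X.IsHermitian)
    (htwirl : ∫ U : unitaryGroup (Fin d) ℂ,
        ((U : Matrix (Fin d) (Fin d) ℂ) ⊗ₖ (U : Matrix (Fin d) (Fin d) ℂ)) * (X ⊗ₖ X) *
          ((U : Matrix (Fin d) (Fin d) ℂ)ᴴ ⊗ₖ (U : Matrix (Fin d) (Fin d) ℂ)ᴴ) ∂μ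
      = schurWeylTwirl d X) (ρ : Matrix (Fin d) (Fin d) ℂ) :
    Integrable (fun U : unitaryGroup (Fin d) ℂ =>
      ((U : Matrix (Fin d) (Fin d) ℂ)ᴴ * ρ * U * X).trace ^ 2) μ := by
  by_cases hX₀ : X = 0
  · simp [hX₀]
  -- `U(d)` carries an arbitrary measurable structure, so integrability cannot come from
  -- continuity; it comes from the twirl being nonzero, as non-integrable functions integrate to 0.
  simp only [trace_mul_sq_eq_trace_kronecker]
  exact integrable_trace_mul_left_of_integral_ne_zero
    (htwirl ▸ schurWeylTwirl_ne_zero hd hX hX₀) _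

lemma integral_sq_trace_conj_mul (hd : 1 < d) (hX : X.IsHermitian)
    (htwirl : ∫ U : unitaryGroup (Fin d) ℂ,
        ((U : Matrix (Fin d) (Fin d) ℂ) ⊗ₖ (U : Matrix (Fin d) (Fin d) ℂ)) * (X ⊗ₖ X) *
          ((U : Matrix (Fin d) (Fin d) ℂ)ᴴ ⊗ₖ (U : Matrix (Fin d) (Fin d) ℂ)ᴴ) ∂μ
      = schurWeylTwirl d X) (ρ : Matrix (Fin d) (Fin d) ℂ) :
    ∫ U : unitaryGroup (Fin d) ℂ, ((U : Matrix (Fin d) (Fin d) ℂ)ᴴ * ρ * U * X).trace ^ 2 ∂μ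
      = (X.trace ^ 2 + (X * X).trace) * (ρ.trace ^ 2 + (ρ * ρ).trace) / (2 * d * (d + 1))
        + (X.trace ^ 2 - (X * X).trace) * (ρ.trace ^ 2 - (ρ * ρ).trace)
          / (2 * d * (d - 1)) := by
  by_cases hX₀ : X = 0
  · simp [hX₀]
  simp only [trace_mul_sq_eq_trace_kronecker]
  rw [integral_trace_mul_left_of_integral_ne_zero (htwirl ▸ schurWeylTwirl_ne_zero hd hX hX₀),
    htwirl, trace_kronecker_mul_schurWeylTwirl]

end Twirl

theorem haar_average_decoherence_factor_general {d : ℕ} (hd : 1 < d)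
    [MeasurableSpace (Matrix.unitaryGroup (Fin d) ℂ)]
    (μ : Measure (Matrix.unitaryGroup (Fin d) ℂ))
    (ρ D : Matrix (Fin d) (Fin d) ℂ)
    (hρtr : ρ.trace = 1)
    (hD : D ∈ Matrix.unitaryGroup (Fin d) ℂ)
    (htwirl : ∀ X : Matrix (Fin d) (Fin d) ℂ, X.IsHermitian →
      (∫ U : Matrix.unitaryGroup (Fin d) ℂ,
          ((U : Matrix (Fin d) (Fin d) ℂ) ⊗ₖ (U : Matrix (Fin d) (Fin d) ℂ)) * (X ⊗ₖ X) *
            (((U : Matrix (Fin d) (Fin d) ℂ)ᴴ) ⊗ₖ ((U : Matrix (Fin d) (Fin d) ℂ)ᴴ)) ∂μ)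
        = (2 / (d * (d + 1)) : ℂ) •
            ((((1 + swapMatrix d) / 2) * (X ⊗ₖ X)).trace • ((1 + swapMatrix d) / 2))
          + (2 / (d * (d - 1)) : ℂ) •
            ((((1 - swapMatrix d) / 2) * (X ⊗ₖ X)).trace • ((1 - swapMatrix d) / 2))) :
    (∫ U : Matrix.unitaryGroup (Fin d) ℂ,
        ((((U : Matrix (Fin d) (Fin d) ℂ)ᴴ) ⊗ₖ ((U : Matrix (Fin d) (Fin d) ℂ)ᴴ)) * (ρ ⊗ₖ ρ) *
          (((U : Matrix (Fin d) (Fin d) ℂ)) ⊗ₖ ((U : Matrix (Fin d) (Fin d) ℂ))) *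
          (D ⊗ₖ Dᴴ)).trace ∂μ)
      = ((‖D.trace‖ : ℂ) ^ 2) * ((d : ℂ) - (ρ * ρ).trace) / (d * (d ^ 2 - 1))
        + ((d : ℂ) * (ρ * ρ).trace - 1) / (d ^ 2 - 1) := by
  have hre : (ℜ D : Matrix (Fin d) (Fin d) ℂ).IsHermitian := (ℜ D).prop.isHermitian
  have him : (ℑ D : Matrix (Fin d) (Fin d) ℂ).IsHermitian := (ℑ D).prop.isHermitian
  have hnorm : (ℑ D : Matrix (Fin d) (Fin d) ℂ).trace ^ 2
      = (‖D.trace‖ : ℂ) ^ 2 - (ℜ D : Matrix (Fin d) (Fin d) ℂ).trace ^ 2 := by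
    have := trace_mul_mul_trace_mul_conjTranspose 1 D
    simp only [Matrix.one_mul, trace_conjTranspose, Complex.star_def, Complex.mul_conj'] at this
    linear_combination -this
  have hunit : ((ℑ D : Matrix (Fin d) (Fin d) ℂ) * ℑ D).trace
      = d - ((ℜ D : Matrix (Fin d) (Fin d) ℂ) * ℜ D).trace := by
    have := congrArg trace
      (mem_unitary_iff_isStarNormal_and_realPart_sq_add_imaginaryPart_sq_eq_one.mp hD).2
    rw [sq, sq, trace_add, trace_one, Fintype.card_fin] at this
    linear_combination this
  simp only [← mul_kronecker_mul, trace_kronecker, trace_mul_mul_trace_mul_conjTranspose]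
  rw [integral_add (integrable_sq_trace_conj_mul hd hre (htwirl _ hre) ρ)
      (integrable_sq_trace_conj_mul hd him (htwirl _ him) ρ),
    integral_sq_trace_conj_mul hd hre (htwirl _ hre),
    integral_sq_trace_conj_mul hd him (htwirl _ him),
    hnorm, hunit, hρtr]
  have hd₀ : (d : ℂ) ≠ 0 := by exact_mod_cast (by omega : d ≠ 0)
  have hd₁ : (d : ℂ) - 1 ≠ 0 := sub_ne_zero.mpr (by exact_mod_cast (by omega : d ≠ 1))
  have hd₂ : (d : ℂ) + 1 ≠ 0 := by exact_mod_cast (by omega : d + 1 ≠ 0)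
  have hd₃ : (d : ℂ) ^ 2 - 1 ≠ 0 := by
    rw [show (d : ℂ) ^ 2 - 1 = (d - 1) * (d + 1) by ring]
    exact mul_ne_zero hd₁ hd₂
  field_simp
  ring

theorem haar_average_decoherence_factor {d : ℕ} (hd : 1 < d)
    [MeasurableSpace (Matrix.unitaryGroup (Fin d) ℂ)]
    (μ : Measure (Matrix.unitaryGroup (Fin d) ℂ)) [IsProbabilityMeasure μ]
    (ρ D : Matrix (Fin d) (Fin d) ℂ)
    (hρ : ρ.PosSemidef) (hρtr : ρ.trace = 1)
    (hD : D ∈ Matrix.unitaryGroup (Fin d) ℂ) (hDdiag : D.IsDiag)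
    (hD2 : ‖(D * D).trace‖ ≤ d)
    (htwirl : ∀ X : Matrix (Fin d) (Fin d) ℂ, X.IsHermitian →
      (∫ U : Matrix.unitaryGroup (Fin d) ℂ,
          ((U : Matrix (Fin d) (Fin d) ℂ) ⊗ₖ (U : Matrix (Fin d) (Fin d) ℂ)) * (X ⊗ₖ X) *
            (((U : Matrix (Fin d) (Fin d) ℂ)ᴴ) ⊗ₖ ((U : Matrix (Fin d) (Fin d) ℂ)ᴴ)) ∂μ)
        = (2 / (d * (d + 1)) : ℂ) •
            ((((1 + swapMatrix d) / 2) * (X ⊗ₖ X)).trace • ((1 + swapMatrix d) / 2))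
          + (2 / (d * (d - 1)) : ℂ) •
            ((((1 - swapMatrix d) / 2) * (X ⊗ₖ X)).trace • ((1 - swapMatrix d) / 2))) :
    (∫ U : Matrix.unitaryGroup (Fin d) ℂ,
        ((((U : Matrix (Fin d) (Fin d) ℂ)ᴴ) ⊗ₖ ((U : Matrix (Fin d) (Fin d) ℂ)ᴴ)) * (ρ ⊗ₖ ρ) *
          (((U : Matrix (Fin d) (Fin d) ℂ)) ⊗ₖ ((U : Matrix (Fin d) (Fin d) ℂ))) *
          (D ⊗ₖ Dᴴ)).trace ∂μ)
      = ((‖D.trace‖ : ℂ) ^ 2) * ((d : ℂ) - (ρ * ρ).trace) / (d * (d ^ 2 - 1))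
        + ((d : ℂ) * (ρ * ρ).trace - 1) / (d ^ 2 - 1) :=
  haar_average_decoherence_factor_general hd μ ρ D hρtr hD htwirl
end

section
/- For any two density matrices ρ, σ the fidelity F(ρ,σ) = (tr √(√ρ σ √ρ))² is bounded above by the super-fidelity G(ρ,σ) = tr(ρσ) + √((1 − tr ρ²)(1 − tr σ²)). -/
open Matrix
open scoped ComplexOrder

/-- The positive semidefinite square root of a positive semidefinite matrix (as in the older
Mathlib `Matrix.PosSemidef.sqrt`, since removed). -/
noncomputable def Matrix.PosSemidef.sqrt {n : Type*} [Fintype n] [DecidableEq n] {𝕜 : Type*}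
    [RCLike 𝕜] {A : Matrix n n 𝕜} (hA : A.PosSemidef) : Matrix n n 𝕜 :=
  hA.1.eigenvectorUnitary.1 * diagonal ((↑) ∘ (√·) ∘ hA.1.eigenvalues) *
    (star hA.1.eigenvectorUnitary : Matrix n n 𝕜)

/-!
Let `T = √(√ρ σ √ρ)`, so that `F = (tr T)²` and `tr T² = tr ρσ`. Expanding the square,
`(tr T)² = tr T² + 2 tr C₂T`, where `C₂` is the second compound (the action on `Λ²`). Since `C₂` is
multiplicative and commutes with `ᴴ`, `C₂T` is positive with `(C₂T)² = C₂(√ρ)ᴴ C₂σ C₂(√ρ)`, and the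
Hölder inequality `tr |X Y| ≤ ‖X‖₂ ‖Y‖₂` gives `tr C₂T ≤ √(tr C₂ρ · tr C₂σ)`. For a unit-trace state
`2 tr C₂ρ = 1 - tr ρ²`, and this is the super-fidelity bound.
-/

open scoped MatrixOrder

theorem Fintype.sum_prod_eq_sum_lt_add_swap {α M : Type*} [Fintype α] [LinearOrder α]
    [AddCommMonoid M] (f : α × α → M) (hf : ∀ i, f (i, i) = 0) :
    ∑ x, f x = ∑ x : {x : α × α // x.1 < x.2}, (f x + f x.1.swap) := by
  have split (x : α × α) :
      f x = (if x.1 < x.2 then f x else 0) + (if x.2 < x.1 then f x else 0) := by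
    obtain ⟨i, j⟩ := x
    rcases lt_trichotomy i j with h | rfl | h
    · simp [h, h.not_gt]
    · simp [hf]
    · simp [h, h.not_gt]
  have swap : ∑ x : α × α, (if x.2 < x.1 then f x else 0)
      = ∑ x : α × α, (if x.1 < x.2 then f x.swap else 0) :=
    ((Equiv.prodComm α α).sum_comp _).symm
  rw [Fintype.sum_congr _ _ split, Finset.sum_add_distrib, swap, ← Finset.sum_add_distrib]
  simp only [ite_add_ite, add_zero]
  rw [← Finset.sum_filter]
  exact Finset.sum_subtype _ (by simp) _

namespace Matrix

namespace PosSemidef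

variable {n : Type*} [Fintype n] [DecidableEq n] {𝕜 : Type*} [RCLike 𝕜] {A : Matrix n n 𝕜}

theorem sqrt_eq_cfcSqrt (hA : A.PosSemidef) : hA.sqrt = CFC.sqrt A := by
  rw [CFC.sqrt_eq_real_sqrt A hA.nonneg, cfcₙ_eq_cfc, hA.1.cfc_eq, IsHermitian.cfc,
    Unitary.conjStarAlgAut_apply]
  rfl

theorem posSemidef_sqrt (hA : A.PosSemidef) : hA.sqrt.PosSemidef :=
  hA.sqrt_eq_cfcSqrt ▸ (CFC.sqrt_nonneg A).posSemidef

theorem sqrt_mul_self (hA : A.PosSemidef) : hA.sqrt * hA.sqrt = A := by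
  rw [hA.sqrt_eq_cfcSqrt, CFC.sqrt_mul_sqrt_self A hA.nonneg]

end PosSemidef

section SecondCompound

variable {n R : Type*} [LinearOrder n] [CommRing R]

/-- The matrix of `Λ²M` in the basis `eᵢ ∧ eⱼ`, `i < j`: its entries are the `2 × 2` minors. -/
def secondCompound (M : Matrix n n R) :
    Matrix {p : n × n // p.1 < p.2} {p : n × n // p.1 < p.2} R :=
  of fun p q => M p.1.1 q.1.1 * M p.1.2 q.1.2 - M p.1.1 q.1.2 * M p.1.2 q.1.1

theorem secondCompound_conjTranspose [StarRing R] (M : Matrix n n R) :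
    secondCompound Mᴴ = (secondCompound M)ᴴ := by
  ext p q
  simp only [secondCompound, of_apply, conjTranspose_apply, star_sub, star_mul']
  ring

variable [Fintype n]

theorem secondCompound_mul (M N : Matrix n n R) :
    secondCompound (M * N) = secondCompound M * secondCompound N := by
  ext ⟨⟨i, j⟩, -⟩ ⟨⟨k, l⟩, -⟩
  have binet := Fintype.sum_prod_eq_sum_lt_add_swap
    (fun x : n × n => M i x.1 * M j x.2 * (N x.1 k * N x.2 l - N x.1 l * N x.2 k))
    (fun a => by ring)
  simp only [secondCompound, of_apply, mul_apply] at binet ⊢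
  rw [Finset.sum_mul_sum, Finset.sum_mul_sum, ← Finset.sum_sub_distrib]
  convert binet using 1
  · rw [Fintype.sum_prod_type]
    exact Finset.sum_congr rfl fun a _ => by
      rw [← Finset.sum_sub_distrib]; exact Finset.sum_congr rfl fun b _ => by ring
  · exact Finset.sum_congr rfl fun x _ => by simp only [Prod.fst_swap, Prod.snd_swap]; ring

theorem sq_trace_eq_trace_mul_self_add_two_mul_trace_secondCompound (A : Matrix n n R) :
    A.trace ^ 2 = (A * A).trace + 2 * (secondCompound A).trace := by
  have pairs := Fintype.sum_prod_eq_sum_lt_add_swap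
    (fun x : n × n => A x.1 x.1 * A x.2 x.2 - A x.1 x.2 * A x.2 x.1) (fun a => by ring)
  rw [← sub_eq_iff_eq_add', trace, trace, sq, Finset.sum_mul_sum]
  simp only [diag_apply, mul_apply, ← Finset.sum_sub_distrib]
  rw [← Fintype.sum_prod_type', pairs, trace, Finset.mul_sum]
  exact Finset.sum_congr rfl fun x _ => by
    simp only [secondCompound, diag_apply, of_apply, Prod.fst_swap, Prod.snd_swap]; ring

variable {𝕜 : Type*} [RCLike 𝕜] {A : Matrix n n 𝕜}

theorem PosSemidef.secondCompound (hA : A.PosSemidef) : (secondCompound A).PosSemidef := by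
  obtain ⟨B, rfl⟩ := CStarAlgebra.nonneg_iff_eq_star_mul_self.mp hA.nonneg
  rw [star_eq_conjTranspose, secondCompound_mul, secondCompound_conjTranspose]
  exact posSemidef_conjTranspose_mul_self _

theorem IsHermitian.re_trace_sq (hA : A.IsHermitian) :
    RCLike.re A.trace ^ 2 = RCLike.re (A * A).trace + 2 * RCLike.re (secondCompound A).trace := by
  have real : (RCLike.re A.trace : 𝕜) = A.trace :=
    RCLike.conj_eq_iff_re.mp (by rw [← RCLike.star_def, ← trace_conjTranspose, hA.eq])
  have := congrArg RCLike.re (sq_trace_eq_trace_mul_self_add_two_mul_trace_secondCompound A)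
  rwa [← real, ← RCLike.ofReal_pow, RCLike.ofReal_re, map_add, RCLike.ofNat_mul_re] at this

theorem IsHermitian.one_sub_re_trace_mul_self (hA : A.IsHermitian) (h : A.trace = 1) :
    1 - RCLike.re (A * A).trace = 2 * RCLike.re (secondCompound A).trace := by
  have := hA.re_trace_sq
  rw [h, RCLike.one_re, one_pow] at this
  linarith

end SecondCompound

section Holder

variable {n : Type*} [Fintype n] [DecidableEq n] {𝕜 : Type*} [RCLike 𝕜]

theorem re_trace_conjTranspose_mul_le (X Y : Matrix n n 𝕜) :
    RCLike.re (Xᴴ * Y).trace ≤ √(RCLike.re (Xᴴ * X).trace) * √(RCLike.re (Yᴴ * Y).trace) := by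
  let := (1 : Matrix n n 𝕜).toMatrixSeminormedAddCommGroup PosSemidef.one
  let := (1 : Matrix n n 𝕜).toMatrixInnerProductSpace PosSemidef.one
  have cs := re_inner_le_norm (𝕜 := 𝕜) Yᴴ Xᴴ
  rw [norm_eq_sqrt_re_inner (𝕜 := 𝕜), norm_eq_sqrt_re_inner (𝕜 := 𝕜), mul_comm] at cs
  change RCLike.re (Xᴴ * 1 * Yᴴᴴ).trace
      ≤ √(RCLike.re (Xᴴ * 1 * Xᴴᴴ).trace) * √(RCLike.re (Yᴴ * 1 * Yᴴᴴ).trace) at cs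
  simpa only [Matrix.mul_one, conjTranspose_conjTranspose] using cs

/-- `T` is the Moore–Penrose pseudo-inverse `cfc (·⁻¹) S`: this works because `(0 : ℝ)⁻¹ = 0`. -/
theorem PosSemidef.exists_pseudoInverse {S : Matrix n n 𝕜} (hS : S.PosSemidef) :
    ∃ T : Matrix n n 𝕜, T.IsHermitian ∧ T * (S * S) = S ∧ (1 - S * T).PosSemidef := by
  have cont (f : ℝ → ℝ) : ContinuousOn f (spectrum ℝ S) := S.finite_real_spectrum.continuousOn f
  have hSa : IsSelfAdjoint S := hS.isHermitian
  refine ⟨cfc (·⁻¹ : ℝ → ℝ) S, (cfc_predicate (·⁻¹ : ℝ → ℝ) S : IsSelfAdjoint _).isHermitian,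
    ?_, ?_⟩
  · calc cfc (·⁻¹ : ℝ → ℝ) S * (S * S) = cfc (fun x : ℝ => x⁻¹ * (x * x)) S := by
          rw [cfc_mul (·⁻¹) (fun x => x * x) S (cont _) (cont _),
            cfc_mul (fun x => x) (fun x => x) S, cfc_id' ℝ S]
      _ = cfc (fun x : ℝ => x) S := cfc_congr fun x _ => by rw [← mul_assoc, inv_mul_mul_self]
      _ = S := cfc_id' ℝ S
  · have : 1 - S * cfc (·⁻¹ : ℝ → ℝ) S = cfc (fun x : ℝ => 1 - x * x⁻¹) S := by
      rw [cfc_sub (fun _ => 1) (fun x => x * x⁻¹) S (cont _) (cont _), cfc_const_one ℝ S,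
        cfc_mul (fun x => x) (·⁻¹) S (cont _) (cont _), cfc_id' ℝ S]
    rw [this]
    refine (cfc_nonneg fun x _ => ?_).posSemidef
    by_cases hx : x = 0 <;> simp [hx]

/-- Writing `B = Xᴴ X` and letting `T` be the pseudo-inverse of `S`, one has
`tr S = ⟪X, X C T Cᴴ⟫` and `‖X C T Cᴴ‖₂² = tr (C (S T) Cᴴ) ≤ ‖C‖₂²`; conclude by Cauchy–Schwarz. -/
theorem PosSemidef.re_trace_le_of_mul_self_eq {S B C : Matrix n n 𝕜} (hS : S.PosSemidef)
    (hB : B.PosSemidef) (h : S * S = Cᴴ * B * C) :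
    RCLike.re S.trace ≤ √(RCLike.re (Cᴴ * C).trace) * √(RCLike.re B.trace) := by
  obtain ⟨X, rfl⟩ := CStarAlgebra.nonneg_iff_eq_star_mul_self.mp hB.nonneg
  rw [star_eq_conjTranspose] at h ⊢
  obtain ⟨T, hT, hTS, hST⟩ := hS.exists_pseudoInverse
  set Z := X * C * T * Cᴴ
  have trace_eq : (Xᴴ * Z).trace = S.trace := by
    rw [show Xᴴ * Z = Xᴴ * X * C * (T * Cᴴ) by simp only [Z, Matrix.mul_assoc], trace_mul_comm,
      ← hTS, h]
    simp only [Matrix.mul_assoc]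
  have hZ : Zᴴ * Z = C * (S * T) * Cᴴ := by
    rw [← hTS]
    simp only [Z, h, conjTranspose_mul, conjTranspose_conjTranspose, hT.eq, Matrix.mul_assoc]
  have normZ : RCLike.re (Zᴴ * Z).trace ≤ RCLike.re (Cᴴ * C).trace := by
    have := (RCLike.nonneg_iff.mp (hST.mul_mul_conjTranspose_same C).trace_nonneg).1
    rw [Matrix.mul_sub, Matrix.sub_mul, trace_sub, Matrix.mul_one, trace_mul_comm C] at this
    rw [hZ]
    simpa [sub_nonneg] using this
  calc RCLike.re S.trace = RCLike.re (Xᴴ * Z).trace := by rw [trace_eq]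
    _ ≤ √(RCLike.re (Xᴴ * X).trace) * √(RCLike.re (Zᴴ * Z).trace) :=
      re_trace_conjTranspose_mul_le X Z
    _ ≤ √(RCLike.re (Cᴴ * C).trace) * √(RCLike.re (Xᴴ * X).trace) := by
      rw [mul_comm]; gcongr

end Holder

end Matrix

theorem fidelity_le_superfidelity {d : ℕ}
    (ρ σ : Matrix (Fin d) (Fin d) ℂ)
    (hρ : ρ.PosSemidef) (hσ : σ.PosSemidef)
    (hρtr : ρ.trace = 1) (hσtr : σ.trace = 1)
    (h : (hρ.sqrt * σ * hρ.sqrt).PosSemidef) :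
    (h.sqrt.trace.re) ^ 2
      ≤ (ρ * σ).trace.re
        + Real.sqrt ((1 - (ρ * ρ).trace.re) * (1 - (σ * σ).trace.re)) := by
  set R := hρ.sqrt
  set T := h.sqrt
  have hRH : Rᴴ = R := hρ.posSemidef_sqrt.1
  have hTT : T * T = R * σ * R := h.sqrt_mul_self
  have holder := h.posSemidef_sqrt.secondCompound.re_trace_le_of_mul_self_eq hσ.secondCompound
    (C := secondCompound R) (by
      rw [← secondCompound_mul, hTT, ← secondCompound_conjTranspose, hRH, ← secondCompound_mul,
        ← secondCompound_mul])
  rw [← secondCompound_conjTranspose, hRH, ← secondCompound_mul, hρ.sqrt_mul_self] at holder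
  have expand := h.posSemidef_sqrt.1.re_trace_sq
  rw [hTT, trace_mul_cycle, hρ.sqrt_mul_self] at expand
  have purity_ρ := hρ.1.one_sub_re_trace_mul_self hρtr
  have purity_σ := hσ.1.one_sub_re_trace_mul_self hσtr
  have hρ₂ := (RCLike.nonneg_iff.mp hρ.secondCompound.trace_nonneg).1
  simp only [RCLike.re_to_complex] at *
  rw [expand, purity_ρ, purity_σ,
    show ∀ a b : ℝ, 2 * a * (2 * b) = 2 ^ 2 * (a * b) from fun _ _ => by ring,
    Real.sqrt_mul (sq_nonneg 2), Real.sqrt_sq zero_le_two, Real.sqrt_mul hρ₂]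
  gcongr
end

section
/- The polynomial p(d, Δ) = Σ_{0≤n<m≤d−1} [L_n^{(0)}(Δ²) L_m^{(0)}(Δ²) − (n!/m!) Δ^{2(m−n)} (L_n^{(m−n)}(Δ²))²] is an even polynomial in Δ with constant term d(d−1)/2 and coefficient of Δ² equal to −d²(d−1)/2. -/
open Polynomial Finset

/-- The associated Laguerre polynomial `L_n^{(α)}` as a real polynomial. -/
noncomputable def laguerrePoly (n α : ℕ) : Polynomial ℝ :=
  ∑ k ∈ Finset.range (n + 1),
    Polynomial.C (((n + α).choose (n - k) : ℝ) * (-1) ^ k / k.factorial) * Polynomial.X ^ k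

/-- The polynomial `p(d, Δ)` (as a polynomial in `Δ`). -/
noncomputable def shortTimePoly (d : ℕ) : Polynomial ℝ :=
  ∑ n ∈ Finset.range d, ∑ m ∈ Finset.Ico (n + 1) d,
    ((laguerrePoly n 0).comp (Polynomial.X ^ 2) * (laguerrePoly m 0).comp (Polynomial.X ^ 2)
      - Polynomial.C ((n.factorial : ℝ) / m.factorial) * Polynomial.X ^ (2 * (m - n)) *
          ((laguerrePoly n (m - n)).comp (Polynomial.X ^ 2)) ^ 2)

/-! Every summand of `p(d, Δ)` is a polynomial in `Δ²`, so `p(d, Δ) = Q(Δ²)` with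
`Q = Σ_{n<m} (L_n L_m - (n!/m!) x^{m-n} (L_n^{(m-n)})²)`, which makes `p` even and
reduces the claim to the two lowest coefficients of `Q`. Since
`L_n^{(α)}(x) = C(n+α, n) - C(n+α, n-1) x + …`, each summand of `Q` has constant term `1` and linear coefficient `-(n + m)`, lowered by a further
`n + 1` when `m = n + 1` (the only case in which `x^{m-n}` contributes to the linear term).
Summing over the `d(d-1)/2` pairs `n < m < d` gives `d(d-1)/2` and `-d²(d-1)/2`. -/

lemma laguerrePoly_coeff (n α k : ℕ) : (laguerrePoly n α).coeff k =
    if k ≤ n then ((n + α).choose (n - k) : ℝ) * (-1) ^ k / k.factorial else 0 := by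
  simp only [laguerrePoly, finsetSum_coeff, coeff_C_mul, coeff_X_pow, mul_ite, mul_one,
    mul_zero, Finset.sum_ite_eq, mem_range, Nat.lt_succ_iff]

lemma laguerrePoly_coeff_zero (n α : ℕ) :
    (laguerrePoly n α).coeff 0 = ((n + α).choose α : ℝ) := by
  simp [laguerrePoly_coeff, ← Nat.choose_symm_add]

lemma laguerrePoly_zero_coeff_one (n : ℕ) : (laguerrePoly n 0).coeff 1 = -(n : ℝ) := by
  rcases Nat.eq_zero_or_pos n with rfl | hn
  · simp [laguerrePoly_coeff]
  · simp [laguerrePoly_coeff, Nat.one_le_iff_ne_zero.mpr hn.ne', Nat.choose_symm hn]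

noncomputable def shortTimeTerm (n m : ℕ) : Polynomial ℝ :=
  laguerrePoly n 0 * laguerrePoly m 0
    - C ((n.factorial : ℝ) / m.factorial) * X ^ (m - n) * (laguerrePoly n (m - n)) ^ 2

lemma shortTimePoly_eq_expand (d : ℕ) :
    shortTimePoly d = expand ℝ 2
      (∑ n ∈ range d, ∑ m ∈ Ico (n + 1) d, shortTimeTerm n m) := by
  simp only [shortTimePoly, shortTimeTerm, map_sum, map_sub, map_mul, map_pow,
    expand_eq_comp_X_pow, C_comp, X_comp, ← pow_mul, mul_comm 2]

lemma shortTimeTerm_coeff_zero {n m : ℕ} (h : n < m) : (shortTimeTerm n m).coeff 0 = 1 := by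
  simp [shortTimeTerm, mul_coeff_zero, laguerrePoly_coeff_zero, coeff_X_pow,
    (Nat.sub_pos_of_lt h).ne]

lemma shortTimeTerm_coeff_one {n m : ℕ} (h : n < m) :
    (shortTimeTerm n m).coeff 1 = -(n : ℝ) - m - (if m = n + 1 then (n : ℝ) + 1 else 0) := by
  have hcorr : (C ((n.factorial : ℝ) / m.factorial) * X ^ (m - n) *
      laguerrePoly n (m - n) ^ 2).coeff 1 = if m = n + 1 then (n : ℝ) + 1 else 0 := by
    rw [mul_assoc, coeff_C_mul, coeff_X_pow_mul']
    split_ifs with h1 h2 h2 <;> try omega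
    · obtain rfl : m = n + 1 := by omega
      have hf : (n.factorial : ℝ) ≠ 0 := by positivity
      simp only [Nat.sub_self, sq, mul_coeff_zero, laguerrePoly_coeff_zero, Nat.add_sub_cancel_left,
        Nat.choose_one_right, Nat.factorial_succ]
      field_simp
      push_cast
      ring
    · simp
  simp only [shortTimeTerm, coeff_sub, mul_coeff_one, laguerrePoly_zero_coeff_one, hcorr,
    laguerrePoly_coeff_zero, Nat.add_zero, Nat.choose_zero_right, Nat.cast_one]
  ring

lemma sum_range_sum_Ico_succ {M : Type*} [AddCommMonoid M] (f : ℕ → ℕ → M) (d : ℕ) :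
    ∑ n ∈ range (d + 1), ∑ m ∈ Ico (n + 1) (d + 1), f n m =
      ∑ n ∈ range d, ∑ m ∈ Ico (n + 1) d, f n m + ∑ n ∈ range d, f n d := by
  rw [sum_range_succ, Ico_self, sum_empty, add_zero, ← sum_add_distrib]
  exact sum_congr rfl fun n hn => sum_Ico_succ_top (mem_range.mp hn) _

lemma sum_range_natCast (d : ℕ) : ∑ n ∈ range d, (n : ℝ) = d * (d - 1) / 2 := by
  induction d with
  | zero => simp
  | succ d ih => rw [sum_range_succ, ih]; push_cast; ring

lemma sum_range_ite_eq_succ (d : ℕ) :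
    ∑ n ∈ range d, (if d = n + 1 then (n : ℝ) + 1 else 0) = d := by
  cases d <;> simp

lemma sum_pairs_one (d : ℕ) :
    ∑ n ∈ range d, ∑ _m ∈ Ico (n + 1) d, (1 : ℝ) = d * (d - 1) / 2 := by
  induction d with
  | zero => simp
  | succ d ih =>
    rw [sum_range_sum_Ico_succ, ih, sum_const, card_range, nsmul_one]
    push_cast
    ring

lemma sum_pairs_shortTimeTerm_coeff_one (d : ℕ) :
    ∑ n ∈ range d, ∑ m ∈ Ico (n + 1) d,
      (-(n : ℝ) - m - (if m = n + 1 then (n : ℝ) + 1 else 0)) =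
      -((d : ℝ) ^ 2 * (d - 1) / 2) := by
  induction d with
  | zero => simp
  | succ d ih =>
    rw [sum_range_sum_Ico_succ, ih, sum_sub_distrib, sum_sub_distrib, sum_neg_distrib,
      sum_range_natCast, sum_range_ite_eq_succ, sum_const, card_range, nsmul_eq_mul]
    push_cast
    ring

theorem shortTimePoly_even_and_low_coeffs_general (d : ℕ) :
    (∀ k : ℕ, Odd k → (shortTimePoly d).coeff k = 0) ∧
    (shortTimePoly d).coeff 0 = (d : ℝ) * (d - 1) / 2 ∧
    (shortTimePoly d).coeff 2 = -((d : ℝ) ^ 2 * (d - 1) / 2) := by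
  rw [shortTimePoly_eq_expand]
  refine ⟨fun k hk => ?_, ?_, ?_⟩
  · rw [coeff_expand two_pos, if_neg hk.not_two_dvd_nat]
  · rw [coeff_expand two_pos, if_pos (dvd_zero 2), Nat.zero_div, ← sum_pairs_one]
    simp only [finsetSum_coeff]
    exact sum_congr rfl fun n _ => sum_congr rfl fun m hm =>
      shortTimeTerm_coeff_zero (mem_Ico.mp hm).1
  · rw [coeff_expand two_pos, if_pos dvd_rfl, Nat.div_self two_pos,
      ← sum_pairs_shortTimeTerm_coeff_one]
    simp only [finsetSum_coeff]
    exact sum_congr rfl fun n _ => sum_congr rfl fun m hm =>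
      shortTimeTerm_coeff_one (mem_Ico.mp hm).1

theorem shortTimePoly_even_and_low_coeffs (d : ℕ) (hd : 2 ≤ d) :
    (∀ k : ℕ, Odd k → (shortTimePoly d).coeff k = 0) ∧
    (shortTimePoly d).coeff 0 = (d : ℝ) * (d - 1) / 2 ∧
    (shortTimePoly d).coeff 2 = -((d : ℝ) ^ 2 * (d - 1) / 2) :=
  shortTimePoly_even_and_low_coeffs_general d
end
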